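/- Let a : Fin n → ℤ be totally positive normalized, let Δ = Δ_0 ∩ Δ_a, and let μ be a K-algebra automorphism of Mₙ(K) such that the map D ↦ μ(D) sends the set of maximal R-orders of Mₙ(K) containing Δ bijectively onto itself. Then either (μ(Δ_0) = Δ_0 and μ(Δ_a) = Δ_a) or (μ(Δ_0) = Δ_a and μ(Δ_a) = Δ_0). (Split case, B = K, of the Lemma: an automorphism μ of the algebra with μ(S₀(Δ)) = S₀(Δ) satisfies {μ(Δ₀), μ(Δ_[b])} = {Δ₀, Δ_[b]}.) -/

import Mathlib

/-!
A maximal order `D` containing the diagonal idempotents is some `Δ_c`: if `m i j` is the least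
`t` with `π ^ t e_ij ∈ D` (it exists because `D` is finitely generated and spans `Mₙ(K)`), then
`m` is subadditive and `D ⊆ Δ_c` for `c i = m i i₀`. Hence every `Δ_b` is maximal, and `μ` sends
`Δ_0, Δ_a` to some `Δ_b, Δ_c`. As `μ` permutes the maximal orders containing `Δ = Δ_0 ∩ Δ_a`,
`Δ_b ∩ Δ_c = Δ`; testing on the elements `π ^ t e_ij` gives
`max (b i - b j) (c i - c j) = max 0 (a i - a j)`, and for monotone `a` this forces one of `b, c`
to be constant and the other to differ from `a` by a constant.
-/

variable (R K : Type*) [CommRing R] [IsDomain R] [IsDiscreteValuationRing R]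
  [Field K] [Algebra R K] [IsFractionRing R K]

/-- The order `Δ_a` in `Mₙ(K)`: matrices `X` with `π^(a j - a i) * X i j ∈ R` for all `i, j`. -/
def Delta (π : R) {n : ℕ} (a : Fin n → ℤ) : Set (Matrix (Fin n) (Fin n) K) :=
  {X | ∀ i j, (algebraMap R K π) ^ (a j - a i) * X i j ∈ (algebraMap R K).range}

/-- An `R`-order in `Mₙ(K)`: an `R`-subalgebra, finitely generated as an `R`-module,
spanning `Mₙ(K)` over `K`. -/
def IsOrder {n : ℕ} (D : Subalgebra R (Matrix (Fin n) (Fin n) K)) : Prop :=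
  (Subalgebra.toSubmodule D).FG ∧
    Submodule.span K (D : Set (Matrix (Fin n) (Fin n) K)) = ⊤

/-- A maximal `R`-order in `Mₙ(K)`. -/
def IsMaximalOrder {n : ℕ} (D : Subalgebra R (Matrix (Fin n) (Fin n) K)) : Prop :=
  IsOrder R K D ∧ ∀ D' : Subalgebra R (Matrix (Fin n) (Fin n) K),
    IsOrder R K D' → D ≤ D' → D' = D

open Matrix

section

variable {R K : Type*} [CommRing R] [Field K] [Algebra R K] {π : R} {n : ℕ}

theorem Delta_congr {b c : Fin n → ℤ} (h : ∀ i j, b i - b j = c i - c j) :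
    Delta R K π b = Delta R K π c := by
  simp only [Delta, fun i j => h j i]

theorem single_zpow_mem_of_apply_eq {D : Subalgebra R (Matrix (Fin n) (Fin n) K)}
    (hdiag : ∀ i, single i i (1 : K) ∈ D) {X : Matrix (Fin n) (Fin n) K} (hX : X ∈ D)
    {i j : Fin n} {u : Rˣ} {t : ℤ} (h : X i j = u • algebraMap R K π ^ t) :
    single i j (algebraMap R K π ^ t) ∈ D := by
  have hsingle : single i j (X i j) ∈ D := by
    simpa using mul_mem (mul_mem (hdiag i) hX) (hdiag j)
  have hunit := D.smul_mem hsingle ((u⁻¹ : Rˣ) : R)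
  rwa [h, smul_single, ← Units.smul_def, inv_smul_smul] at hunit

end

section SpanZPow

variable {R K : Type*} [CommRing R] [Field K] [Algebra R K] [IsFractionRing R K] {π : R}

variable (K) in
def spanZPow (π : R) (m : ℤ) : Submodule R K := R ∙ algebraMap R K π ^ m

theorem mem_spanZPow_iff (hπ : π ≠ 0) {m : ℤ} {x : K} :
    x ∈ spanZPow K π m ↔ algebraMap R K π ^ (-m) * x ∈ (algebraMap R K).range := by
  have hp : algebraMap R K π ≠ 0 := by simpa using hπ
  rw [spanZPow, Submodule.mem_span_singleton]
  constructor
  · rintro ⟨r, rfl⟩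
    exact ⟨r, by rw [Algebra.smul_def, mul_left_comm, ← zpow_add₀ hp, neg_add_cancel, zpow_zero,
      mul_one]⟩
  · rintro ⟨r, hr⟩
    exact ⟨r, by rw [Algebra.smul_def, hr, mul_comm, ← mul_assoc, ← zpow_add₀ hp, add_neg_cancel,
      zpow_zero, one_mul]⟩

theorem spanZPow_antitone (hπ : π ≠ 0) : Antitone (spanZPow K π) := by
  intro m' m h
  have hp : algebraMap R K π ≠ 0 := by simpa using hπ
  rw [spanZPow, Submodule.span_singleton_le_iff_mem, spanZPow, Submodule.mem_span_singleton]
  refine ⟨π ^ (m - m').toNat, ?_⟩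
  rw [Algebra.smul_def, map_pow, ← zpow_natCast, Int.toNat_of_nonneg (by omega), ← zpow_add₀ hp,
    sub_add_cancel]

theorem mul_mem_spanZPow (hπ : π ≠ 0) {m m' : ℤ} {x y : K} (hx : x ∈ spanZPow K π m)
    (hy : y ∈ spanZPow K π m') : x * y ∈ spanZPow K π (m + m') := by
  have hp : algebraMap R K π ≠ 0 := by simpa using hπ
  obtain ⟨r, rfl⟩ := Submodule.mem_span_singleton.mp hx
  obtain ⟨s, rfl⟩ := Submodule.mem_span_singleton.mp hy
  refine Submodule.mem_span_singleton.mpr ⟨r * s, ?_⟩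
  simp only [Algebra.smul_def, map_mul, zpow_add₀ hp]
  ring

theorem units_smul_zpow_mem_spanZPow_iff (hπ : Irreducible π) (u : Rˣ) {m t : ℤ} :
    u • algebraMap R K π ^ t ∈ spanZPow K π m ↔ m ≤ t := by
  have hp : algebraMap R K π ≠ 0 := by simpa using hπ.ne_zero
  refine ⟨fun h => ?_, fun h => Submodule.smul_of_tower_mem _ u
    (spanZPow_antitone hπ.ne_zero h (Submodule.mem_span_singleton_self _))⟩
  by_contra! htm
  obtain ⟨r, hr⟩ := Submodule.mem_span_singleton.mp h
  -- `r π ^ (m - t) = u` would make `π` divide a unit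
  have hru : r * π ^ (m - t).toNat = u := by
    apply IsFractionRing.injective R K
    rw [map_mul, map_pow, ← zpow_natCast, Int.toNat_of_nonneg (by omega), zpow_sub₀ hp,
      ← mul_div_assoc, ← Algebra.smul_def, hr, Units.smul_def, Algebra.smul_def,
      mul_div_assoc, div_self (zpow_ne_zero _ hp), mul_one]
  apply hπ.not_isUnit
  refine isUnit_of_dvd_unit ?_ u.isUnit
  rw [← hru]
  exact (dvd_pow_self π (by omega)).mul_left r

theorem zpow_mem_spanZPow_iff (hπ : Irreducible π) {m t : ℤ} :
    algebraMap R K π ^ t ∈ spanZPow K π m ↔ m ≤ t := by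
  simpa using units_smul_zpow_mem_spanZPow_iff (K := K) hπ 1

theorem exists_forall_mem_spanZPow [IsDomain R] [IsDiscreteValuationRing R]
    (hπ : Irreducible π) {ι : Type*} [Finite ι] (f : ι → K) :
    ∃ N, ∀ i, f i ∈ spanZPow K π N := by
  have hmem : ∀ x : K, ∃ m, x ∈ spanZPow K π m := by
    intro x
    rcases eq_or_ne x 0 with rfl | hx
    · exact ⟨0, zero_mem _⟩
    obtain ⟨m, u, rfl⟩ := IsDiscreteValuationRing.exists_units_eq_smul_zpow_of_irreducible hπ hx
    exact ⟨m, (units_smul_zpow_mem_spanZPow_iff hπ u).mpr le_rfl⟩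
  choose m hm using fun i => hmem (f i)
  obtain ⟨N, hN⟩ := Finite.exists_ge m
  exact ⟨N, fun i => spanZPow_antitone hπ.ne_zero (hN i) (hm i)⟩

end SpanZPow

theorem Matrix.exists_mem_apply_ne_zero_of_span_eq_top {ι κ 𝕜 : Type*} [Field 𝕜]
    [DecidableEq ι] [DecidableEq κ] {s : Set (Matrix ι κ 𝕜)} (hs : Submodule.span 𝕜 s = ⊤)
    (i : ι) (j : κ) : ∃ X ∈ s, X i j ≠ 0 := by
  by_contra! h
  have : Submodule.span 𝕜 s ≤ LinearMap.ker (entryLinearMap 𝕜 𝕜 i j) :=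
    Submodule.span_le.mpr h
  rw [hs, top_le_iff, LinearMap.ker_eq_top] at this
  simpa using LinearMap.congr_fun this (single i j 1)

section Delta

variable {R K : Type*} [CommRing R] [Field K] [Algebra R K] [IsFractionRing R K] {π : R}
  {n : ℕ}

theorem mem_Delta_iff (hπ : π ≠ 0) {a : Fin n → ℤ} {X : Matrix (Fin n) (Fin n) K} :
    X ∈ Delta R K π a ↔ ∀ i j, X i j ∈ spanZPow K π (a i - a j) := by
  simp only [Delta, Set.mem_ofPred_eq, mem_spanZPow_iff hπ, neg_sub]

theorem single_mem_Delta_iff (hπ : π ≠ 0) {a : Fin n → ℤ} {i j : Fin n} {x : K} :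
    single i j x ∈ Delta R K π a ↔ x ∈ spanZPow K π (a i - a j) := by
  rw [mem_Delta_iff hπ]
  refine ⟨fun h => by simpa using h i j, fun h i' j' => ?_⟩
  by_cases hij : i = i' ∧ j = j'
  · obtain ⟨rfl, rfl⟩ := hij
    simpa using h
  · rw [single_apply_of_ne _ _ _ _ _ hij]
    exact zero_mem _

theorem single_one_mem_Delta (hπ : π ≠ 0) (a : Fin n → ℤ) (i : Fin n) :
    single i i (1 : K) ∈ Delta R K π a := by
  rw [single_mem_Delta_iff hπ, sub_self]
  simp [spanZPow]

theorem single_zpow_mem_Delta_iff (hπ : Irreducible π) {a : Fin n → ℤ} {i j : Fin n} {t : ℤ} :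
    single i j (algebraMap R K π ^ t) ∈ Delta R K π a ↔ a i - a j ≤ t := by
  rw [single_mem_Delta_iff hπ.ne_zero, zpow_mem_spanZPow_iff hπ]

theorem Delta_subset_Delta_iff (hπ : Irreducible π) {b c : Fin n → ℤ} :
    Delta R K π b ⊆ Delta R K π c ↔ ∀ i j, c i - c j ≤ b i - b j := by
  refine ⟨fun h i j => ?_, fun h X hX => ?_⟩
  · exact (single_zpow_mem_Delta_iff hπ).mp
      (h ((single_zpow_mem_Delta_iff (K := K) hπ).mpr le_rfl))
  · exact (mem_Delta_iff hπ.ne_zero).mpr fun i j =>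
      spanZPow_antitone hπ.ne_zero (h i j) ((mem_Delta_iff hπ.ne_zero).mp hX i j)

theorem Delta_eq_of_subset (hπ : Irreducible π) {b c : Fin n → ℤ}
    (h : Delta R K π b ⊆ Delta R K π c) : Delta R K π b = Delta R K π c := by
  refine h.antisymm ((Delta_subset_Delta_iff hπ).mpr fun i j => ?_)
  have := (Delta_subset_Delta_iff hπ).mp h j i
  omega

theorem max_sub_le_of_Delta_inter_subset (hπ : Irreducible π) {b c d e : Fin n → ℤ}
    (h : Delta R K π b ∩ Delta R K π c ⊆ Delta R K π d ∩ Delta R K π e) (i j : Fin n) :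
    max (d i - d j) (e i - e j) ≤ max (b i - b j) (c i - c j) := by
  have mem_iff : ∀ (f g : Fin n → ℤ) (t : ℤ), single i j (algebraMap R K π ^ t) ∈
      Delta R K π f ∩ Delta R K π g ↔ max (f i - f j) (g i - g j) ≤ t := by
    simp [single_zpow_mem_Delta_iff hπ]
  exact (mem_iff d e _).mp (h ((mem_iff b c _).mpr le_rfl))

variable (K) in
def deltaSubalgebra (hπ : π ≠ 0) (a : Fin n → ℤ) : Subalgebra R (Matrix (Fin n) (Fin n) K) where
  carrier := Delta R K π a
  mul_mem' {X Y} hX hY := (mem_Delta_iff hπ).mpr fun i j => by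
    rw [mul_apply]
    refine Submodule.sum_mem _ fun k _ => ?_
    simpa using
      mul_mem_spanZPow hπ ((mem_Delta_iff hπ).mp hX i k) ((mem_Delta_iff hπ).mp hY k j)
  add_mem' hX hY := (mem_Delta_iff hπ).mpr fun i j =>
    add_mem ((mem_Delta_iff hπ).mp hX i j) ((mem_Delta_iff hπ).mp hY i j)
  algebraMap_mem' r := (mem_Delta_iff hπ).mpr fun i j => by
    rw [algebraMap_matrix_apply]
    split_ifs with hij
    · subst hij
      rw [sub_self]
      exact Submodule.mem_span_singleton.mpr ⟨r, by simp [Algebra.smul_def]⟩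
    · exact zero_mem _

theorem mem_deltaSubalgebra (hπ : π ≠ 0) {a : Fin n → ℤ} {X : Matrix (Fin n) (Fin n) K} :
    X ∈ deltaSubalgebra K hπ a ↔ X ∈ Delta R K π a :=
  Iff.rfl

theorem toSubmodule_deltaSubalgebra (hπ : π ≠ 0) (a : Fin n → ℤ) :
    Subalgebra.toSubmodule (deltaSubalgebra K hπ a) = Submodule.span R (Set.range
      fun q : Fin n × Fin n => single q.1 q.2 (algebraMap R K π ^ (a q.1 - a q.2))) := by
  refine le_antisymm (fun X hX => ?_) (Submodule.span_le.mpr ?_)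
  · rw [Subalgebra.mem_toSubmodule, mem_deltaSubalgebra] at hX
    rw [matrix_eq_sum_single X]
    refine Submodule.sum_mem _ fun i _ => Submodule.sum_mem _ fun j _ => ?_
    obtain ⟨r, hr⟩ := Submodule.mem_span_singleton.mp ((mem_Delta_iff hπ).mp hX i j)
    rw [← hr, ← smul_single]
    exact Submodule.smul_mem _ r (Submodule.subset_span ⟨(i, j), rfl⟩)
  · rintro _ ⟨q, rfl⟩
    exact (single_mem_Delta_iff (K := K) hπ).mpr (Submodule.mem_span_singleton_self _)

theorem isOrder_deltaSubalgebra (hπ : π ≠ 0) (a : Fin n → ℤ) :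
    IsOrder R K (deltaSubalgebra K hπ a) := by
  have hp : algebraMap R K π ≠ 0 := by simpa using hπ
  refine ⟨toSubmodule_deltaSubalgebra (K := K) hπ a ▸ Submodule.fg_span (Set.finite_range _),
    ?_⟩
  rw [eq_top_iff, ← (stdBasis K (Fin n) (Fin n)).span_eq, Submodule.span_le]
  rintro _ ⟨⟨i, j⟩, rfl⟩
  have hsingle : single i j (1 : K) = algebraMap R K π ^ (-(a i - a j)) •
      single i j (algebraMap R K π ^ (a i - a j)) := by
    rw [smul_single, smul_eq_mul, ← zpow_add₀ hp, neg_add_cancel, zpow_zero]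
  rw [stdBasis_eq_single, hsingle]
  exact Submodule.smul_mem _ _ (Submodule.subset_span ((single_mem_Delta_iff (K := K) hπ).mpr
    (Submodule.mem_span_singleton_self _)))

end Delta

section Orders

variable {R K : Type*} [CommRing R] [IsDomain R] [IsDiscreteValuationRing R] [Field K]
  [Algebra R K] [IsFractionRing R K] {π : R}

theorem Submodule.FG.exists_forall_apply_mem_spanZPow (hπ : Irreducible π) {ι κ : Type*}
    [Finite ι] [Finite κ] {M : Submodule R (Matrix ι κ K)} (hM : M.FG) :
    ∃ N, ∀ X ∈ M, ∀ i j, X i j ∈ spanZPow K π N := by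
  obtain ⟨s, rfl⟩ := hM
  obtain ⟨N, hN⟩ := exists_forall_mem_spanZPow hπ
    fun q : s × ι × κ => (q.1 : Matrix ι κ K) q.2.1 q.2.2
  refine ⟨N, fun X hX => Submodule.span_induction (fun Y hY i j => hN ⟨⟨Y, hY⟩, i, j⟩)
    (fun _ _ => zero_mem _) (fun _ _ _ _ hY hZ i j => add_mem (hY i j) (hZ i j))
    (fun r _ _ hY i j => Submodule.smul_mem _ r (hY i j)) hX⟩

variable {n : ℕ}

theorem IsOrder.exists_subset_Delta (hπ : Irreducible π)
    {D : Subalgebra R (Matrix (Fin n) (Fin n) K)} (hD : IsOrder R K D)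
    (hdiag : ∀ i, single i i (1 : K) ∈ D) :
    ∃ c : Fin n → ℤ, (D : Set (Matrix (Fin n) (Fin n) K)) ⊆ Delta R K π c := by
  obtain ⟨N, hN⟩ := hD.1.exists_forall_apply_mem_spanZPow hπ
  have hleast : ∀ i j, ∃ m, IsLeast {t : ℤ | single i j (algebraMap R K π ^ t) ∈ D} m := by
    intro i j
    obtain ⟨X, hX, hXij⟩ := exists_mem_apply_ne_zero_of_span_eq_top hD.2 i j
    obtain ⟨t, u, ht⟩ := IsDiscreteValuationRing.exists_units_eq_smul_zpow_of_irreducible hπ hXij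
    exact Int.exists_least_of_bdd
      ⟨N, fun s hs => (zpow_mem_spanZPow_iff hπ).mp (by simpa using hN _ hs i j)⟩
      ⟨t, single_zpow_mem_of_apply_eq hdiag hX ht⟩
  choose m hm using hleast
  have hm_mem : ∀ i j, single i j (algebraMap R K π ^ m i j) ∈ D := fun i j => (hm i j).1
  have hentry : ∀ X ∈ D, ∀ i j, X i j ∈ spanZPow K π (m i j) := by
    intro X hX i j
    rcases eq_or_ne (X i j) 0 with h0 | h0
    · rw [h0]
      exact zero_mem _
    obtain ⟨t, u, ht⟩ := IsDiscreteValuationRing.exists_units_eq_smul_zpow_of_irreducible hπ h0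
    rw [ht, units_smul_zpow_mem_spanZPow_iff hπ]
    exact (hm i j).2 (single_zpow_mem_of_apply_eq hdiag hX ht)
  have hsubadd : ∀ i j k, m i k ≤ m i j + m j k := fun i j k =>
    (hm i k).2 (by simpa [zpow_add₀ (by simpa using hπ.ne_zero : algebraMap R K π ≠ 0)]
      using mul_mem (hm_mem i j) (hm_mem j k))
  rcases isEmpty_or_nonempty (Fin n) with _ | ⟨⟨i₀⟩⟩
  · exact ⟨0, fun X _ => (mem_Delta_iff hπ.ne_zero).mpr fun i => isEmptyElim i⟩
  · refine ⟨fun i => m i i₀, fun X hX => (mem_Delta_iff hπ.ne_zero).mpr fun i j =>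
      spanZPow_antitone hπ.ne_zero ?_ (hentry X hX i j)⟩
    linarith [hsubadd i j i₀]

theorem isMaximalOrder_deltaSubalgebra (hπ : Irreducible π) (b : Fin n → ℤ) :
    IsMaximalOrder R K (deltaSubalgebra K hπ.ne_zero b) := by
  refine ⟨isOrder_deltaSubalgebra hπ.ne_zero b,
    fun D hD hle => le_antisymm (fun X hX => ?_) hle⟩
  obtain ⟨c, hc⟩ := hD.exists_subset_Delta hπ fun i => hle (single_one_mem_Delta hπ.ne_zero b i)
  have hbc : Delta R K π b = Delta R K π c :=
    Delta_eq_of_subset hπ (Set.Subset.trans (fun Y hY => hle hY) hc)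
  rw [mem_deltaSubalgebra, hbc]
  exact hc hX

theorem IsMaximalOrder.exists_eq_Delta (hπ : Irreducible π)
    {D : Subalgebra R (Matrix (Fin n) (Fin n) K)} (hD : IsMaximalOrder R K D)
    (hdiag : ∀ i, single i i (1 : K) ∈ D) :
    ∃ c : Fin n → ℤ, (D : Set (Matrix (Fin n) (Fin n) K)) = Delta R K π c := by
  obtain ⟨c, hc⟩ := hD.1.exists_subset_Delta hπ hdiag
  exact ⟨c, congrArg SetLike.coe
    (hD.2 (deltaSubalgebra K hπ.ne_zero c) (isOrder_deltaSubalgebra hπ.ne_zero c) hc).symm⟩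

end Orders

section Combinatorics

variable {ι : Type*} [LinearOrder ι] {a b c : ι → ℤ}

theorem const_or_const_of_max_sub_eq (ha : Monotone a)
    (h : ∀ i j, max (b i - b j) (c i - c j) = max 0 (a i - a j)) :
    (∀ i j, b i = b j) ∨ (∀ i j, c i = c j) := by
  have hle : ∀ i j, i ≤ j → b i ≤ b j ∧ c i ≤ c j ∧ (b i = b j ∨ c i = c j) := by
    intro i j hij
    have := h i j
    have := ha hij
    omega
  by_contra! ⟨⟨p, q, hpq⟩, ⟨r, s, hrs⟩⟩
  -- on a segment containing `p, q, r, s` both `b` and `c` would have to increase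
  set l := min (min p q) (min r s)
  set u := max (max p q) (max r s)
  have hl : l ≤ p ∧ l ≤ q ∧ l ≤ r ∧ l ≤ s := by simp [l]
  have hu : p ≤ u ∧ q ≤ u ∧ r ≤ u ∧ s ≤ u := by simp [u]
  have := hle l p hl.1; have := hle l q hl.2.1; have := hle l r hl.2.2.1
  have := hle l s hl.2.2.2; have := hle p u hu.1; have := hle q u hu.2.1
  have := hle r u hu.2.2.1; have := hle s u hu.2.2.2
  have := hle l u (hl.1.trans hu.1)
  omega

end Combinatorics

theorem sub_eq_of_max_sub_eq_of_const {ι : Type*} {a b c : ι → ℤ} (hb : ∀ i j, b i = b j)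
    (h : ∀ i j, max (b i - b j) (c i - c j) = max 0 (a i - a j)) (i j : ι) :
    c i - c j = a i - a j := by
  have := h i j
  have := h j i
  have := hb i j
  omega

theorem Set.BijOn.image_inter_image_eq {α : Type*} {f : α → α} (hf : Function.Injective f)
    {𝒮 : Set (Set α)} (h : Set.BijOn (Set.image f) 𝒮 𝒮) {A B : Set α} (hA : A ∈ 𝒮)
    (hB : B ∈ 𝒮) (hAB : ∀ S ∈ 𝒮, A ∩ B ⊆ S) : f '' A ∩ f '' B = A ∩ B := by
  have hsub : ∀ C ∈ 𝒮, f '' (A ∩ B) ⊆ C := fun C hC => by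
    obtain ⟨S, hS, rfl⟩ := h.surjOn hC
    exact Set.image_mono (hAB S hS)
  refine Set.Subset.antisymm ?_ (Set.subset_inter (hAB _ (h.mapsTo hA)) (hAB _ (h.mapsTo hB)))
  rw [← Set.image_inter hf]
  exact Set.subset_inter (hsub A hA) (hsub B hB)

theorem stmt6 (π : R) (hπ : Irreducible π) (n : ℕ)
    (a : Fin n → ℤ) (hmono : Monotone a)
    (μ : Matrix (Fin n) (Fin n) K ≃ₐ[K] Matrix (Fin n) (Fin n) K)
    (hμ : Set.BijOn (fun S => ⇑μ '' S)
      {S : Set (Matrix (Fin n) (Fin n) K) |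
        (∃ D : Subalgebra R (Matrix (Fin n) (Fin n) K),
          IsMaximalOrder R K D ∧ (D : Set (Matrix (Fin n) (Fin n) K)) = S) ∧
        Delta R K π (0 : Fin n → ℤ) ∩ Delta R K π a ⊆ S}
      {S : Set (Matrix (Fin n) (Fin n) K) |
        (∃ D : Subalgebra R (Matrix (Fin n) (Fin n) K),
          IsMaximalOrder R K D ∧ (D : Set (Matrix (Fin n) (Fin n) K)) = S) ∧
        Delta R K π (0 : Fin n → ℤ) ∩ Delta R K π a ⊆ S}) :
    (⇑μ '' Delta R K π (0 : Fin n → ℤ) = Delta R K π (0 : Fin n → ℤ) ∧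
      ⇑μ '' Delta R K π a = Delta R K π a) ∨
    (⇑μ '' Delta R K π (0 : Fin n → ℤ) = Delta R K π a ∧
      ⇑μ '' Delta R K π a = Delta R K π (0 : Fin n → ℤ)) := by
  set 𝒮 := {S : Set (Matrix (Fin n) (Fin n) K) |
    (∃ D : Subalgebra R (Matrix (Fin n) (Fin n) K),
      IsMaximalOrder R K D ∧ (D : Set (Matrix (Fin n) (Fin n) K)) = S) ∧
    Delta R K π (0 : Fin n → ℤ) ∩ Delta R K π a ⊆ S}
  have h0 : Delta R K π 0 ∈ 𝒮 :=
    ⟨⟨_, isMaximalOrder_deltaSubalgebra hπ 0, rfl⟩, Set.inter_subset_left⟩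
  have ha : Delta R K π a ∈ 𝒮 :=
    ⟨⟨_, isMaximalOrder_deltaSubalgebra hπ a, rfl⟩, Set.inter_subset_right⟩
  have hDelta : ∀ S ∈ 𝒮, ∃ b, S = Delta R K π b := by
    rintro _ ⟨⟨D, hD, rfl⟩, hsub⟩
    exact hD.exists_eq_Delta hπ fun i => hsub
      ⟨single_one_mem_Delta hπ.ne_zero 0 i, single_one_mem_Delta hπ.ne_zero a i⟩
  obtain ⟨b, hb⟩ := hDelta _ (hμ.mapsTo h0)
  obtain ⟨c, hc⟩ := hDelta _ (hμ.mapsTo ha)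
  have hinter : Delta R K π b ∩ Delta R K π c = Delta R K π 0 ∩ Delta R K π a :=
    hb ▸ hc ▸ hμ.image_inter_image_eq μ.injective h0 ha fun S hS => hS.2
  have hmax : ∀ i j, max (b i - b j) (c i - c j) = max 0 (a i - a j) := fun i j => by
    simpa using le_antisymm (max_sub_le_of_Delta_inter_subset hπ hinter.superset i j)
      (max_sub_le_of_Delta_inter_subset hπ hinter.subset i j)
  rw [hb, hc]
  rcases const_or_const_of_max_sub_eq hmono hmax with hbc | hcc
  · exact .inl ⟨Delta_congr fun i j => by simp [hbc i j],
      Delta_congr (sub_eq_of_max_sub_eq_of_const hbc hmax)⟩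
  · have hmax' : ∀ i j, max (c i - c j) (b i - b j) = max 0 (a i - a j) := fun i j =>
      max_comm (c i - c j) _ ▸ hmax i j
    exact .inr ⟨Delta_congr (sub_eq_of_max_sub_eq_of_const hcc hmax'),
      Delta_congr fun i j => by simp [hcc i j]⟩
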